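/- arXiv:0812.1378 — 3 statements merged into one kernel-verified Lean document; each statement's English description precedes it below -/
import Mathlib

section
/- Let S be a self-adjoint operator on a 3-dimensional real inner product space with eigenvalues λ₁ < λ₂ < λ₃ and corresponding orthonormal eigenvectors η₁, η₂, η₃. Define ω± = √((λ₂−λ₁)/(λ₃−λ₁)) η₁ ± √((λ₃−λ₂)/(λ₃−λ₁)) η₃. Then ω± are unit vectors, and for every v in the orthogonal complement of ω₊ (and likewise of ω₋) one has ⟨Sv, v⟩ = λ₂ |v|². -/
/-! In the eigenbasis, `⟪S v, v⟫ - λ₂ ‖v‖² = (λ₁ - λ₂) a² + (λ₃ - λ₂) c²` with `a = ⟪η₁, v⟫` and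
`c = ⟪η₃, v⟫`. Orthogonality to `ω±` means `√(λ₂ - λ₁) a = ∓ √(λ₃ - λ₂) c`, and squaring this
says precisely that the right-hand side vanishes. -/

open scoped RealInnerProductSpace

open Finset Module

section
variable {ι E : Type*} [NormedAddCommGroup E] [InnerProductSpace ℝ E]

theorem OrthonormalBasis.inner_map_self_eq_sum [Fintype ι] (b : OrthonormalBasis ι ℝ E)
    {S : E →ₗ[ℝ] E} {μ : ι → ℝ} (hS : ∀ i, S (b i) = μ i • b i) (v : E) :
    ⟪S v, v⟫ = ∑ i, μ i * ⟪b i, v⟫ ^ 2 := by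
  have hSv : S v = ∑ i, (μ i * ⟪b i, v⟫) • b i := by
    conv_lhs => rw [← b.sum_repr' v]
    simp only [map_sum, map_smul, hS, smul_smul, mul_comm]
  simp only [hSv, sum_inner, real_inner_smul_left]
  exact Finset.sum_congr rfl fun i _ => by ring

theorem Orthonormal.exists_orthonormalBasis_coe_eq [Fintype ι] [Nonempty ι]
    [FiniteDimensional ℝ E] {v : ι → E} (hv : Orthonormal ℝ v)
    (card_eq : Fintype.card ι = finrank ℝ E) :
    ∃ b : OrthonormalBasis ι ℝ E, ⇑b = v := by
  let b₀ := basisOfOrthonormalOfCardEqFinrank hv card_eq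
  refine ⟨b₀.toOrthonormalBasis (by simpa [b₀] using hv), ?_⟩
  simp [b₀]

theorem norm_smul_add_smul_sq_of_orthonormal {x y : E} (hx : ‖x‖ = 1) (hy : ‖y‖ = 1)
    (hxy : ⟪x, y⟫ = 0) (a b : ℝ) : ‖a • x + b • y‖ ^ 2 = a ^ 2 + b ^ 2 := by
  simp [norm_add_sq_real, norm_smul, real_inner_smul_left, real_inner_smul_right, hx, hy, hxy]

theorem inner_map_self_sub_mul_norm_sq_of_orthonormal_three [FiniteDimensional ℝ E]
    (hdim : finrank ℝ E = 3) {S : E →ₗ[ℝ] E} {l₁ l₂ l₃ : ℝ} {η₁ η₂ η₃ : E}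
    (hη : Orthonormal ℝ ![η₁, η₂, η₃])
    (he₁ : S η₁ = l₁ • η₁) (he₂ : S η₂ = l₂ • η₂) (he₃ : S η₃ = l₃ • η₃) (v : E) :
    ⟪S v, v⟫ - l₂ * ‖v‖ ^ 2 = (l₁ - l₂) * ⟪η₁, v⟫ ^ 2 + (l₃ - l₂) * ⟪η₃, v⟫ ^ 2 := by
  obtain ⟨b, hb⟩ := hη.exists_orthonormalBasis_coe_eq (by simp [hdim])
  have hS : ∀ i, S (b i) = ![l₁, l₂, l₃] i • b i := by
    intro i; fin_cases i <;> simp [hb, he₁, he₂, he₃]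
  rw [b.inner_map_self_eq_sum hS, ← b.sum_sq_inner_right]
  simp only [Fin.sum_univ_three, hb, Matrix.cons_val_zero, Matrix.cons_val_one, Matrix.cons_val]
  ring

theorem sub_mul_sq_add_sub_mul_sq_eq_zero {l₁ l₂ l₃ a b x y : ℝ} (hl : l₁ < l₂ ∧ l₂ < l₃)
    (ha : a ^ 2 = (l₂ - l₁) / (l₃ - l₁)) (hb : b ^ 2 = (l₃ - l₂) / (l₃ - l₁))
    (h : a * x + b * y = 0) : (l₁ - l₂) * x ^ 2 + (l₃ - l₂) * y ^ 2 = 0 := by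
  have hd : l₃ - l₁ ≠ 0 := by linarith
  have hsq : a ^ 2 * x ^ 2 = b ^ 2 * y ^ 2 := by
    rw [← mul_pow, ← mul_pow, eq_neg_of_add_eq_zero_left h, neg_sq]
  rw [ha, hb] at hsq
  field_simp at hsq
  linarith

theorem norm_eq_one_and_inner_map_self_eq_on_orthogonal [FiniteDimensional ℝ E]
    (hdim : finrank ℝ E = 3) {S : E →ₗ[ℝ] E} {l₁ l₂ l₃ : ℝ} (hl : l₁ < l₂ ∧ l₂ < l₃)
    {η₁ η₂ η₃ : E} (hη : Orthonormal ℝ ![η₁, η₂, η₃])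
    (he₁ : S η₁ = l₁ • η₁) (he₂ : S η₂ = l₂ • η₂) (he₃ : S η₃ = l₃ • η₃) {a b : ℝ}
    (ha : a ^ 2 = (l₂ - l₁) / (l₃ - l₁)) (hb : b ^ 2 = (l₃ - l₂) / (l₃ - l₁)) :
    ‖a • η₁ + b • η₃‖ = 1 ∧
      ∀ v : E, ⟪a • η₁ + b • η₃, v⟫ = 0 → ⟪S v, v⟫ = l₂ * ‖v‖ ^ 2 := by
  have h1 : ‖η₁‖ = 1 := hη.norm_eq_one 0
  have h3 : ‖η₃‖ = 1 := hη.norm_eq_one 2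
  have h13 : ⟪η₁, η₃⟫ = 0 := hη.inner_eq_zero (i := 0) (j := 2) (by decide)
  constructor
  · have hab : a ^ 2 + b ^ 2 = 1 := by
      rw [ha, hb, ← add_div, div_eq_one_iff_eq (by linarith)]; ring
    rw [← pow_eq_one_iff_of_nonneg (norm_nonneg _) two_ne_zero,
      norm_smul_add_smul_sq_of_orthonormal h1 h3 h13, hab]
  · intro v hv
    rw [inner_add_left, real_inner_smul_left, real_inner_smul_left] at hv
    have := inner_map_self_sub_mul_norm_sq_of_orthonormal_three hdim hη he₁ he₂ he₃ v
    linarith [sub_mul_sq_add_sub_mul_sq_eq_zero hl ha hb hv]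

end

theorem stmt_8_general
    (V : Type*) [NormedAddCommGroup V] [InnerProductSpace ℝ V]
    [FiniteDimensional ℝ V] (hdim : Module.finrank ℝ V = 3)
    (S : V →ₗ[ℝ] V)
    (l₁ l₂ l₃ : ℝ) (hl : l₁ < l₂ ∧ l₂ < l₃)
    (η₁ η₂ η₃ : V)
    (he₁ : S η₁ = l₁ • η₁) (he₂ : S η₂ = l₂ • η₂) (he₃ : S η₃ = l₃ • η₃)
    (hn₁ : ‖η₁‖ = 1) (hn₂ : ‖η₂‖ = 1) (hn₃ : ‖η₃‖ = 1)
    (ho₁₂ : ⟪η₁, η₂⟫ = 0) (ho₁₃ : ⟪η₁, η₃⟫ = 0) (ho₂₃ : ⟪η₂, η₃⟫ = 0)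
    (ωp ωm : V)
    (hωp : ωp = Real.sqrt ((l₂ - l₁) / (l₃ - l₁)) • η₁ +
      Real.sqrt ((l₃ - l₂) / (l₃ - l₁)) • η₃)
    (hωm : ωm = Real.sqrt ((l₂ - l₁) / (l₃ - l₁)) • η₁ -
      Real.sqrt ((l₃ - l₂) / (l₃ - l₁)) • η₃) :
    ‖ωp‖ = 1 ∧ ‖ωm‖ = 1 ∧
      (∀ v : V, ⟪ωp, v⟫ = 0 → ⟪S v, v⟫ = l₂ * ‖v‖ ^ 2) ∧
      (∀ v : V, ⟪ωm, v⟫ = 0 → ⟪S v, v⟫ = l₂ * ‖v‖ ^ 2) := by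
  have hη : Orthonormal ℝ ![η₁, η₂, η₃] := by
    simp [orthonormal_vecCons_iff, Fin.forall_fin_two, hn₁, hn₂, hn₃, ho₁₂, ho₁₃, ho₂₃]
  have h₁₃ : 0 ≤ l₃ - l₁ := sub_nonneg.2 (hl.1.trans hl.2).le
  have ha := Real.sq_sqrt (div_nonneg (sub_nonneg.2 hl.1.le) h₁₃)
  have hb := Real.sq_sqrt (div_nonneg (sub_nonneg.2 hl.2.le) h₁₃)
  obtain ⟨hp, hp'⟩ :=
    norm_eq_one_and_inner_map_self_eq_on_orthogonal hdim hl hη he₁ he₂ he₃ ha hb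
  obtain ⟨hm, hm'⟩ :=
    norm_eq_one_and_inner_map_self_eq_on_orthogonal hdim hl hη he₁ he₂ he₃ ha ((neg_sq _).trans hb)
  rw [neg_smul, ← sub_eq_add_neg, ← hωm] at hm hm'
  exact ⟨hωp ▸ hp, hm, hωp ▸ hp', hm'⟩

/-- For a self-adjoint operator `S` with eigenvalues `λ₁ < λ₂ < λ₃` and orthonormal
eigenvectors `η₁, η₂, η₃`, the vectors `ω± = √((λ₂−λ₁)/(λ₃−λ₁)) η₁ ± √((λ₃−λ₂)/(λ₃−λ₁)) η₃`
are unit vectors, and the quadratic form of `S` restricted to `ω±⊥` is `λ₂ |·|²`. -/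
theorem stmt_8
    (V : Type*) [NormedAddCommGroup V] [InnerProductSpace ℝ V]
    [FiniteDimensional ℝ V] (hdim : Module.finrank ℝ V = 3)
    (S : V →ₗ[ℝ] V) (hsym : LinearMap.IsSymmetric S)
    (l₁ l₂ l₃ : ℝ) (hl : l₁ < l₂ ∧ l₂ < l₃)
    (η₁ η₂ η₃ : V)
    (he₁ : S η₁ = l₁ • η₁) (he₂ : S η₂ = l₂ • η₂) (he₃ : S η₃ = l₃ • η₃)
    (hn₁ : ‖η₁‖ = 1) (hn₂ : ‖η₂‖ = 1) (hn₃ : ‖η₃‖ = 1)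
    (ho₁₂ : ⟪η₁, η₂⟫ = 0) (ho₁₃ : ⟪η₁, η₃⟫ = 0) (ho₂₃ : ⟪η₂, η₃⟫ = 0)
    (ωp ωm : V)
    (hωp : ωp = Real.sqrt ((l₂ - l₁) / (l₃ - l₁)) • η₁ +
      Real.sqrt ((l₃ - l₂) / (l₃ - l₁)) • η₃)
    (hωm : ωm = Real.sqrt ((l₂ - l₁) / (l₃ - l₁)) • η₁ -
      Real.sqrt ((l₃ - l₂) / (l₃ - l₁)) • η₃) :
    ‖ωp‖ = 1 ∧ ‖ωm‖ = 1 ∧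
      (∀ v : V, ⟪ωp, v⟫ = 0 → ⟪S v, v⟫ = l₂ * ‖v‖ ^ 2) ∧
      (∀ v : V, ⟪ωm, v⟫ = 0 → ⟪S v, v⟫ = l₂ * ‖v‖ ^ 2) :=
  stmt_8_general V hdim S l₁ l₂ l₃ hl η₁ η₂ η₃ he₁ he₂ he₃ hn₁ hn₂ hn₃ ho₁₂ ho₁₃ ho₂₃ ωp ωm hωp hωm
end

section
/- Let S be a self-adjoint positive definite operator on a 3-dimensional real inner product space with eigenvalues λ₁ < λ₂ < λ₃. Then, up to sign, there are exactly two unit vectors ω such that the quadratic form v ↦ ⟨Sv, v⟩ restricted to the plane ω⊥ equals λ₂ |v|²; namely ω = ω₊ or ω = ω₋, where ω± = √((λ₂−λ₁)/(λ₃−λ₁)) η₁ ± √((λ₃−λ₂)/(λ₃−λ₁)) η₃ and η₁, η₃ are unit eigenvectors for λ₁, λ₃. -/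
/-!
Write `ω = a η₁ + b η₂ + c η₃` in the eigenbasis. For eigenvectors `x, y` the vector
`⟪y, ω⟫ x - ⟪x, ω⟫ y` is orthogonal to `ω`, so `⟪S v, v⟫ = λ₂ ‖v‖²` holds for it. For the
pair `(η₁, η₂)` this gives `b² (λ₁ - λ₂) = 0`, hence `b = 0`; for `(η₁, η₃)` it gives
`c² (λ₁ - λ₂) + a² (λ₃ - λ₂) = 0`, which together with `a² + c² = 1` determines `a²` and `c²`.
-/

open scoped RealInnerProductSpace

section

variable {V : Type*} [NormedAddCommGroup V] [InnerProductSpace ℝ V]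

theorem LinearMap.IsSymmetric.inner_eq_zero_of_eigenvalue_ne {S : V →ₗ[ℝ] V}
    (hS : S.IsSymmetric) {x y : V} {μ ν : ℝ} (hx : S x = μ • x) (hy : S y = ν • y)
    (hμν : μ ≠ ν) : ⟪x, y⟫ = 0 :=
  (hS.orthogonalFamily_eigenspaces.isOrtho hμν).inner_eq
    (Module.End.mem_eigenspace_iff.2 hx) (Module.End.mem_eigenspace_iff.2 hy)

theorem orthonormal_vecCons_three {x y z : V} (hx : ‖x‖ = 1) (hy : ‖y‖ = 1) (hz : ‖z‖ = 1)
    (hxy : ⟪x, y⟫ = 0) (hxz : ⟪x, z⟫ = 0) (hyz : ⟪y, z⟫ = 0) :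
    Orthonormal ℝ ![x, y, z] := by
  rw [orthonormal_iff_ite]
  intro i j
  fin_cases i <;> fin_cases j <;>
    simp [real_inner_comm, hx, hy, hz, hxy, hxz, hyz]

section OrthonormalOfCardEqFinrank

variable [FiniteDimensional ℝ V] {ι : Type*} [Fintype ι] {v : ι → V}

theorem Orthonormal.sum_inner_smul_eq_of_card_eq_finrank (hv : Orthonormal ℝ v)
    (hcard : Fintype.card ι = Module.finrank ℝ V) (x : V) : ∑ i, ⟪v i, x⟫ • v i = x := by
  have hsp := hv.linearIndependent.span_eq_top_of_card_eq_finrank' hcard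
  simpa using (OrthonormalBasis.mk hv hsp.ge).sum_repr' x

theorem Orthonormal.sum_sq_inner_eq_of_card_eq_finrank (hv : Orthonormal ℝ v)
    (hcard : Fintype.card ι = Module.finrank ℝ V) (x : V) : ∑ i, ⟪v i, x⟫ ^ 2 = ‖x‖ ^ 2 := by
  have hsp := hv.linearIndependent.span_eq_top_of_card_eq_finrank' hcard
  simpa using (OrthonormalBasis.mk hv hsp.ge).sum_sq_inner_right x

end OrthonormalOfCardEqFinrank

theorem sq_inner_mul_add_sq_inner_mul_eq_zero {S : V →ₗ[ℝ] V} {ω x y : V} {l μ ν : ℝ}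
    (hω : ∀ v : V, ⟪ω, v⟫ = 0 → ⟪S v, v⟫ = l * ‖v‖ ^ 2)
    (hx : S x = μ • x) (hy : S y = ν • y) (hnx : ‖x‖ = 1) (hny : ‖y‖ = 1) (hxy : ⟪x, y⟫ = 0) :
    ⟪y, ω⟫ ^ 2 * (μ - l) + ⟪x, ω⟫ ^ 2 * (ν - l) = 0 := by
  set a := ⟪x, ω⟫
  set b := ⟪y, ω⟫
  have hxx : ⟪x, x⟫ = 1 := by rw [real_inner_self_eq_norm_sq, hnx, one_pow]
  have hyy : ⟪y, y⟫ = 1 := by rw [real_inner_self_eq_norm_sq, hny, one_pow]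
  have hyx : ⟪y, x⟫ = 0 := by rw [real_inner_comm, hxy]
  have horth : ⟪ω, b • x - a • y⟫ = 0 := by
    rw [inner_sub_right, real_inner_smul_right, real_inner_smul_right, real_inner_comm x ω,
      real_inner_comm y ω]
    ring
  have h := hω _ horth
  rw [← real_inner_self_eq_norm_sq, map_sub, map_smul, map_smul, hx, hy] at h
  simp only [inner_sub_left, inner_sub_right, real_inner_smul_left, real_inner_smul_right,
    hxx, hyy, hxy, hyx] at h
  linear_combination h

theorem Real.eq_sqrt_or_eq_neg_sqrt_of_sq_eq {a r : ℝ} (h : a ^ 2 = r) : a = √r ∨ a = -√r :=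
  sq_eq_sq_iff_eq_or_eq_neg.1 (by rw [h, Real.sq_sqrt (h ▸ sq_nonneg a)])

theorem smul_add_smul_eq_or_of_eq_or_eq_neg {M : Type*} [AddCommGroup M] [Module ℝ M]
    {a c s t : ℝ} (x y : M) (ha : a = s ∨ a = -s) (hc : c = t ∨ c = -t) :
    a • x + c • y = s • x + t • y ∨ a • x + c • y = -(s • x + t • y) ∨
      a • x + c • y = s • x - t • y ∨ a • x + c • y = -(s • x - t • y) := by
  rcases ha with rfl | rfl <;> rcases hc with rfl | rfl
  · exact Or.inl rfl
  · exact Or.inr (Or.inr (Or.inl (by module)))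
  · exact Or.inr (Or.inr (Or.inr (by module)))
  · exact Or.inr (Or.inl (by module))

end

theorem stmt_9_general
    (V : Type*) [NormedAddCommGroup V] [InnerProductSpace ℝ V]
    [FiniteDimensional ℝ V] (hdim : Module.finrank ℝ V = 3)
    (S : V →ₗ[ℝ] V) (hsym : LinearMap.IsSymmetric S)
    (l₁ l₂ l₃ : ℝ) (hl : l₁ < l₂ ∧ l₂ < l₃)
    (η₁ η₂ η₃ : V)
    (he₁ : S η₁ = l₁ • η₁) (he₂ : S η₂ = l₂ • η₂) (he₃ : S η₃ = l₃ • η₃)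
    (hn₁ : ‖η₁‖ = 1) (hn₂ : ‖η₂‖ = 1) (hn₃ : ‖η₃‖ = 1)
    (ωp ωm : V)
    (hωp : ωp = Real.sqrt ((l₂ - l₁) / (l₃ - l₁)) • η₁ +
      Real.sqrt ((l₃ - l₂) / (l₃ - l₁)) • η₃)
    (hωm : ωm = Real.sqrt ((l₂ - l₁) / (l₃ - l₁)) • η₁ -
      Real.sqrt ((l₃ - l₂) / (l₃ - l₁)) • η₃)
    (ω : V) (hω : ‖ω‖ = 1)
    (hconf : ∀ v : V, ⟪ω, v⟫ = 0 → ⟪S v, v⟫ = l₂ * ‖v‖ ^ 2) :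
    ω = ωp ∨ ω = -ωp ∨ ω = ωm ∨ ω = -ωm := by
  obtain ⟨h₁₂, h₂₃⟩ := hl
  have h₁₃ : l₁ < l₃ := h₁₂.trans h₂₃
  have o₁₂ := hsym.inner_eq_zero_of_eigenvalue_ne he₁ he₂ h₁₂.ne
  have o₁₃ := hsym.inner_eq_zero_of_eigenvalue_ne he₁ he₃ h₁₃.ne
  have o₂₃ := hsym.inner_eq_zero_of_eigenvalue_ne he₂ he₃ h₂₃.ne
  have hon := orthonormal_vecCons_three hn₁ hn₂ hn₃ o₁₂ o₁₃ o₂₃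
  have hcard : Fintype.card (Fin 3) = Module.finrank ℝ V := by simp [hdim]
  have hexp := hon.sum_inner_smul_eq_of_card_eq_finrank hcard ω
  have hsum := hon.sum_sq_inner_eq_of_card_eq_finrank hcard ω
  simp only [Fin.sum_univ_three, Matrix.cons_val_zero, Matrix.cons_val_one,
    Matrix.cons_val_two, Matrix.head_cons, Matrix.tail_cons, hω, one_pow] at hexp hsum
  have r₁₂ := sq_inner_mul_add_sq_inner_mul_eq_zero hconf he₁ he₂ hn₁ hn₂ o₁₂
  have r₁₃ := sq_inner_mul_add_sq_inner_mul_eq_zero hconf he₁ he₃ hn₁ hn₃ o₁₃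
  have hb : ⟪η₂, ω⟫ = 0 := by
    rw [sub_self, mul_zero, add_zero, mul_eq_zero, or_iff_left (sub_ne_zero.2 h₁₂.ne)] at r₁₂
    exact pow_eq_zero_iff two_ne_zero |>.1 r₁₂
  rw [hb, zero_smul, add_zero] at hexp
  rw [hb] at hsum
  have ha := Real.eq_sqrt_or_eq_neg_sqrt_of_sq_eq (a := ⟪η₁, ω⟫) (r := (l₂ - l₁) / (l₃ - l₁))
    (by field_simp [sub_ne_zero.2 h₁₃.ne']; linear_combination r₁₃ - (l₁ - l₂) * hsum)
  have hc := Real.eq_sqrt_or_eq_neg_sqrt_of_sq_eq (a := ⟪η₃, ω⟫) (r := (l₃ - l₂) / (l₃ - l₁))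
    (by field_simp [sub_ne_zero.2 h₁₃.ne']; linear_combination (l₃ - l₂) * hsum - r₁₃)
  rw [hωp, hωm, ← hexp]
  exact smul_add_smul_eq_or_of_eq_or_eq_neg η₁ η₃ ha hc

/-- Up to sign, the only unit vectors `ω` such that the quadratic form of `S`
restricted to `ω⊥` equals `λ₂ |·|²` are `ω₊` and `ω₋`. -/
theorem stmt_9
    (V : Type*) [NormedAddCommGroup V] [InnerProductSpace ℝ V]
    [FiniteDimensional ℝ V] (hdim : Module.finrank ℝ V = 3)
    (S : V →ₗ[ℝ] V) (hsym : LinearMap.IsSymmetric S)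
    (hpos : ∀ v : V, v ≠ 0 → 0 < ⟪S v, v⟫)
    (l₁ l₂ l₃ : ℝ) (hl : l₁ < l₂ ∧ l₂ < l₃)
    (η₁ η₂ η₃ : V)
    (he₁ : S η₁ = l₁ • η₁) (he₂ : S η₂ = l₂ • η₂) (he₃ : S η₃ = l₃ • η₃)
    (hn₁ : ‖η₁‖ = 1) (hn₂ : ‖η₂‖ = 1) (hn₃ : ‖η₃‖ = 1)
    (ωp ωm : V)
    (hωp : ωp = Real.sqrt ((l₂ - l₁) / (l₃ - l₁)) • η₁ +
      Real.sqrt ((l₃ - l₂) / (l₃ - l₁)) • η₃)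
    (hωm : ωm = Real.sqrt ((l₂ - l₁) / (l₃ - l₁)) • η₁ -
      Real.sqrt ((l₃ - l₂) / (l₃ - l₁)) • η₃)
    (ω : V) (hω : ‖ω‖ = 1)
    (hconf : ∀ v : V, ⟪ω, v⟫ = 0 → ⟪S v, v⟫ = l₂ * ‖v‖ ^ 2) :
    ω = ωp ∨ ω = -ωp ∨ ω = ωm ∨ ω = -ωm :=
  stmt_9_general V hdim S hsym l₁ l₂ l₃ hl η₁ η₂ η₃ he₁ he₂ he₃ hn₁ hn₂ hn₃ ωp ωm hωp hωm ω hω hconf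
end

section
/- Let S be a self-adjoint operator on ℝ³ with eigenvalues λ₁ < λ₂ < λ₃ and orthonormal eigenvectors η₁, η₂, η₃, and let ω = √((λ₂−λ₁)/(λ₃−λ₁)) η₁ + √((λ₃−λ₂)/(λ₃−λ₁)) η₃. Define B(ω) = [S, C(ω)] = S∘C(ω) − C(ω)∘S, where C(ω)v = ω × v (cross product computed in the oriented orthonormal basis η₁, η₂, η₃). Then B(ω) = μ (ω ⊙ η₂) with μ = √(λ₃−λ₂)·√(λ₂−λ₁), where (ω ⊙ η₂)α = ⟨ω, α⟩η₂ + ⟨η₂, α⟩ω. -/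
/-!
Both sides are linear in `α`, so it suffices to compare them on the eigenbasis. For eigenvectors,
`[S, C(ηᵢ)] ηⱼ = (λₖ - λⱼ) ηᵢ × ηⱼ` where `ηᵢ × ηⱼ = ±ηₖ`. For `ω = a η₁ + b η₃` this gives
`B(ω) η₁ = b (λ₂ - λ₁) η₂`, `B(ω) η₂ = b (λ₂ - λ₁) η₁ + a (λ₃ - λ₂) η₃` and `B(ω) η₃ = a (λ₃ - λ₂) η₂`,
which agree with `μ (ω ⊙ η₂)` as soon as `μ a = b (λ₂ - λ₁)` and `μ b = a (λ₃ - λ₂)`; the square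
roots in `ω` and `μ` are chosen to satisfy both.
-/

open scoped RealInnerProductSpace

/-- The cross product on `ℝ³`. -/
noncomputable def cross3 (a b : EuclideanSpace ℝ (Fin 3)) : EuclideanSpace ℝ (Fin 3) :=
  WithLp.toLp 2 ![a 1 * b 2 - a 2 * b 1, a 2 * b 0 - a 0 * b 2, a 0 * b 1 - a 1 * b 0]

open scoped Matrix

local notation "E" => EuclideanSpace ℝ (Fin 3)

-- In the paper's notation `C(ω) = cross3ₗ ω`, `B(ω) = ⁅S, C(ω)⁆` and `u ⊙ v = symProd u v`.
noncomputable def cross3ₗ : E →ₗ[ℝ] E →ₗ[ℝ] E :=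
  let e := WithLp.linearEquiv 2 ℝ (Fin 3 → ℝ)
  (crossProduct.compl₁₂ e.toLinearMap e.toLinearMap).compr₂ e.symm.toLinearMap

@[simp] lemma cross3ₗ_apply (a b : E) : cross3ₗ a b = cross3 a b := rfl

lemma cross3_eq_toLp_crossProduct (a b : E) : cross3 a b = WithLp.toLp 2 (a.ofLp ⨯₃ b.ofLp) := rfl

lemma cross3_self (a : E) : cross3 a a = 0 := by
  simp [cross3_eq_toLp_crossProduct]

lemma cross3_anticomm (a b : E) : cross3 b a = -cross3 a b := by
  rw [cross3_eq_toLp_crossProduct, cross3_eq_toLp_crossProduct, ← cross_anticomm]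
  rfl

lemma cross3_cross3 (u v w : E) : cross3 u (cross3 v w) = ⟪u, w⟫ • v - ⟪u, v⟫ • w := by
  simp [cross3_eq_toLp_crossProduct, cross_cross_eq_smul_sub_smul',
    EuclideanSpace.inner_eq_star_dotProduct, dotProduct_comm]

section SymmetricProduct

variable {F : Type*} [NormedAddCommGroup F] [InnerProductSpace ℝ F]

noncomputable def symProd (u v : F) : Module.End ℝ F :=
  (innerₗ F u).smulRight v + (innerₗ F v).smulRight u

@[simp] lemma symProd_apply (u v x : F) : symProd u v x = ⟪u, x⟫ • v + ⟪v, x⟫ • u := rfl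

end SymmetricProduct

lemma Module.End.bracket_apply {R M : Type*} [CommRing R] [AddCommGroup M] [Module R M]
    (S T : Module.End R M) (x : M) : ⁅S, T⁆ x = S (T x) - T (S x) := by
  rw [LieRing.of_associative_ring_bracket]; rfl

lemma cross3_cyclic {η₁ η₂ : E} (h₁ : ‖η₁‖ = 1) (h₂ : ‖η₂‖ = 1) (h₁₂ : ⟪η₁, η₂⟫ = 0) :
    cross3 η₂ (cross3 η₁ η₂) = η₁ ∧ cross3 (cross3 η₁ η₂) η₁ = η₂ := by
  constructor
  · simp [cross3_cross3, h₂, real_inner_comm, h₁₂]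
  · rw [cross3_anticomm, cross3_cross3]
    simp [h₁, h₁₂]

theorem lie_cross3ₗ_eq_smul_symProd (S : Module.End ℝ E) {η : Fin 3 → E} {l : Fin 3 → ℝ}
    {a b μ : ℝ} (hη : Orthonormal ℝ η) (horient : cross3 (η 0) (η 1) = η 2)
    (he : ∀ i, S (η i) = l i • η i)
    (hμa : b * (l 1 - l 0) = μ * a) (hμb : a * (l 2 - l 1) = μ * b) :
    ⁅S, cross3ₗ (a • η 0 + b • η 2)⁆ = μ • symProd (a • η 0 + b • η 2) (η 1) := by
  have hinner := orthonormal_iff_ite.mp hη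
  obtain ⟨c12, c20⟩ := cross3_cyclic (hη.1 0) (hη.1 1) (hη.2 (by decide))
  rw [horient] at c12 c20
  have c21 : cross3 (η 2) (η 1) = -η 0 := by rw [cross3_anticomm, c12]
  have c02 : cross3 (η 0) (η 2) = -η 1 := by rw [cross3_anticomm, c20]
  refine (basisOfOrthonormalOfCardEqFinrank hη (by simp)).ext fun i => ?_
  rw [coe_basisOfOrthonormalOfCardEqFinrank]
  fin_cases i <;>
    simp only [Fin.zero_eta, Fin.mk_one, Fin.reduceFinMk, Fin.isValue, Module.End.bracket_apply,
      LinearMap.add_apply, LinearMap.smul_apply, map_add, map_smul, map_neg, map_zero, cross3ₗ_apply,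
      he, cross3_self, horient, c20, c21, c02, symProd_apply, inner_add_left,
      real_inner_smul_left, hinner, Fin.reduceEq, ↓reduceIte]
  · linear_combination (norm := module) hμa • η 1
  · linear_combination (norm := module) hμa • η 0 + hμb • η 2
  · linear_combination (norm := module) hμb • η 1

lemma sqrt_mul_sqrt_mul_sqrt_div {p r : ℝ} (hp : 0 ≤ p) (hr : 0 ≤ r) (q : ℝ) :
    √q * √p * √(p / r) = √(q / r) * p := by
  rw [Real.sqrt_div hp, Real.sqrt_div' q hr, mul_div_assoc', mul_assoc, Real.mul_self_sqrt hp]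
  ring

theorem stmt_11_general
    (S : EuclideanSpace ℝ (Fin 3) →ₗ[ℝ] EuclideanSpace ℝ (Fin 3))
    (l₁ l₂ l₃ : ℝ) (hl : l₁ < l₂ ∧ l₂ < l₃)
    (η₁ η₂ η₃ : EuclideanSpace ℝ (Fin 3))
    (he₁ : S η₁ = l₁ • η₁) (he₂ : S η₂ = l₂ • η₂) (he₃ : S η₃ = l₃ • η₃)
    (hn₁ : ‖η₁‖ = 1) (hn₂ : ‖η₂‖ = 1) (hn₃ : ‖η₃‖ = 1)
    (ho₁₂ : ⟪η₁, η₂⟫ = 0) (ho₁₃ : ⟪η₁, η₃⟫ = 0) (ho₂₃ : ⟪η₂, η₃⟫ = 0)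
    (horient : cross3 η₁ η₂ = η₃)
    (ω : EuclideanSpace ℝ (Fin 3))
    (hω : ω = Real.sqrt ((l₂ - l₁) / (l₃ - l₁)) • η₁ +
      Real.sqrt ((l₃ - l₂) / (l₃ - l₁)) • η₃) :
    ∀ α : EuclideanSpace ℝ (Fin 3),
      S (cross3 ω α) - cross3 ω (S α) =
        (Real.sqrt (l₃ - l₂) * Real.sqrt (l₂ - l₁)) •
          (⟪ω, α⟫ • η₂ + ⟪η₂, α⟫ • ω) := by
  obtain ⟨h₁₂, h₂₃⟩ := hl
  have hη : Orthonormal ℝ ![η₁, η₂, η₃] := by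
    rw [orthonormal_iff_ite]
    intro i j
    fin_cases i <;> fin_cases j <;> simp [hn₁, hn₂, hn₃, ho₁₂, ho₁₃, ho₂₃, real_inner_comm]
  have he : ∀ i, S (![η₁, η₂, η₃] i) = ![l₁, l₂, l₃] i • ![η₁, η₂, η₃] i := by
    intro i; fin_cases i <;> assumption
  have hμa : √((l₃ - l₂) / (l₃ - l₁)) * (l₂ - l₁) =
      (√(l₃ - l₂) * √(l₂ - l₁)) * √((l₂ - l₁) / (l₃ - l₁)) :=
    (sqrt_mul_sqrt_mul_sqrt_div (by linarith) (by linarith) _).symm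
  have hμb : √((l₂ - l₁) / (l₃ - l₁)) * (l₃ - l₂) =
      (√(l₃ - l₂) * √(l₂ - l₁)) * √((l₃ - l₂) / (l₃ - l₁)) := by
    rw [mul_comm √(l₃ - l₂)]
    exact (sqrt_mul_sqrt_mul_sqrt_div (by linarith) (by linarith) _).symm
  intro α
  simpa [← hω, Module.End.bracket_apply] using
    LinearMap.congr_fun (lie_cross3ₗ_eq_smul_symProd S hη horient he hμa hμb) α

/-- With `ω = √((λ₂−λ₁)/(λ₃−λ₁)) η₁ + √((λ₃−λ₂)/(λ₃−λ₁)) η₃`, the commutator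
`B(ω) = [S, C(ω)]` equals `μ (ω ⊙ η₂)` with `μ = √(λ₃−λ₂)·√(λ₂−λ₁)`. -/
theorem stmt_11
    (S : EuclideanSpace ℝ (Fin 3) →ₗ[ℝ] EuclideanSpace ℝ (Fin 3))
    (hsym : LinearMap.IsSymmetric S)
    (l₁ l₂ l₃ : ℝ) (hl : l₁ < l₂ ∧ l₂ < l₃)
    (η₁ η₂ η₃ : EuclideanSpace ℝ (Fin 3))
    (he₁ : S η₁ = l₁ • η₁) (he₂ : S η₂ = l₂ • η₂) (he₃ : S η₃ = l₃ • η₃)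
    (hn₁ : ‖η₁‖ = 1) (hn₂ : ‖η₂‖ = 1) (hn₃ : ‖η₃‖ = 1)
    (ho₁₂ : ⟪η₁, η₂⟫ = 0) (ho₁₃ : ⟪η₁, η₃⟫ = 0) (ho₂₃ : ⟪η₂, η₃⟫ = 0)
    (horient : cross3 η₁ η₂ = η₃)
    (ω : EuclideanSpace ℝ (Fin 3))
    (hω : ω = Real.sqrt ((l₂ - l₁) / (l₃ - l₁)) • η₁ +
      Real.sqrt ((l₃ - l₂) / (l₃ - l₁)) • η₃) :
    ∀ α : EuclideanSpace ℝ (Fin 3),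
      S (cross3 ω α) - cross3 ω (S α) =
        (Real.sqrt (l₃ - l₂) * Real.sqrt (l₂ - l₁)) •
          (⟪ω, α⟫ • η₂ + ⟪η₂, α⟫ • ω) :=
  stmt_11_general S l₁ l₂ l₃ hl η₁ η₂ η₃ he₁ he₂ he₃ hn₁ hn₂ hn₃ ho₁₂ ho₁₃ ho₂₃ horient ω hω
end
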